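/- Let ω ∈ {1, −1}, v_s > 0, τ ∈ ℝ with |τ| ≤ 1/2, K ∈ ℂ, C₀ > 0, and let ŵ : ℝ² → ℝ satisfy ŵ(0,0) = 1 and |ŵ(p) − 1| ≤ C₀·‖p‖ for all p with ‖p‖ ≤ 1. Define v_c := v_s·(1+τ)/(1−τ) and, for p = (p₀,p₁) ≠ (0,0), v(p) := v_s·(1+τŵ(p))/(1−τŵ(p)) and N(p) := −(K/(1−τŵ(p)))·(−i p₀ − ω v_s p₁)/(−i p₀ + ω v(p) p₁). Then there exist ε > 0 and C₁ > 0, depending only on v_s, τ and C₀, such that for all p with 0 < ‖p‖ ≤ ε all the denominators above are nonzero and |N(p) − (−(K/(1−τ))·(−i p₀ − ω v_s p₁)/(−i p₀ + ω v_c p₁))| ≤ C₁·|K|·‖p‖. -/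

import Mathlib

/-!
Multiplying the denominator of `N` by `1 - τŵ` clears the division in `v(p)` and gives
`F(ŵ) = (1 - τŵ)(-ip₀) + ωv_s(1 + τŵ)p₁`, which is affine in `ŵ` with
`F(1) - F(ŵ) = τ(ŵ - 1)A`, where `A = -ip₀ - ωv_sp₁` is the numerator. Hence
`N(ŵ) - N(1) = -KA(F(1) - F(ŵ))/(F(ŵ)F(1))` is `K τ (ŵ - 1) A² / (F(ŵ)F(1))` up to sign.
For `|τŵ| ≤ 3/4` all coefficients of `F` are comparable to `1`, so `|F| ≳ ‖p‖` and
`|A| ≲ ‖p‖`: the difference is `O(|K| |ŵ - 1|) = O(|K| ‖p‖)`.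
-/

open Complex

lemma mul_sqrt_le_sqrt_mul_sq_add_mul_sq {a b m : ℝ} (x y : ℝ) (hm : 0 ≤ m) (ha : m ≤ |a|)
    (hb : m ≤ |b|) : m * √(x ^ 2 + y ^ 2) ≤ √((a * x) ^ 2 + (b * y) ^ 2) := by
  have ha2 : m ^ 2 ≤ a ^ 2 := sq_le_sq.mpr (by rwa [abs_of_nonneg hm])
  have hb2 : m ^ 2 ≤ b ^ 2 := sq_le_sq.mpr (by rwa [abs_of_nonneg hm])
  rw [← Real.sqrt_sq hm, ← Real.sqrt_mul (sq_nonneg m)]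
  apply Real.sqrt_le_sqrt
  calc m ^ 2 * (x ^ 2 + y ^ 2) = m ^ 2 * x ^ 2 + m ^ 2 * y ^ 2 := by ring
    _ ≤ a ^ 2 * x ^ 2 + b ^ 2 * y ^ 2 := by gcongr
    _ = (a * x) ^ 2 + (b * y) ^ 2 := by ring

lemma sqrt_mul_sq_add_mul_sq_le {a b M : ℝ} (x y : ℝ) (ha : |a| ≤ M) (hb : |b| ≤ M) :
    √((a * x) ^ 2 + (b * y) ^ 2) ≤ M * √(x ^ 2 + y ^ 2) := by
  have hM : 0 ≤ M := (abs_nonneg a).trans ha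
  have ha2 : a ^ 2 ≤ M ^ 2 := sq_le_sq.mpr (by rwa [abs_of_nonneg hM])
  have hb2 : b ^ 2 ≤ M ^ 2 := sq_le_sq.mpr (by rwa [abs_of_nonneg hM])
  rw [← Real.sqrt_sq hM, ← Real.sqrt_mul (sq_nonneg M)]
  apply Real.sqrt_le_sqrt
  calc (a * x) ^ 2 + (b * y) ^ 2 = a ^ 2 * x ^ 2 + b ^ 2 * y ^ 2 := by ring
    _ ≤ M ^ 2 * x ^ 2 + M ^ 2 * y ^ 2 := by gcongr
    _ = M ^ 2 * (x ^ 2 + y ^ 2) := by ring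

lemma Complex.norm_ofReal_mul_neg_I_mul_add (a b x y : ℝ) :
    ‖(a : ℂ) * (-I * x) + b * y‖ = √((a * x) ^ 2 + (b * y) ^ 2) := by
  have : (a : ℂ) * (-I * x) + b * y = ((b * y : ℝ) : ℂ) + ((-(a * x) : ℝ) : ℂ) * I := by
    push_cast; ring
  rw [this, norm_add_mul_I, neg_sq, add_comm]

lemma norm_div_sub_div {c F G : ℂ} (hF : F ≠ 0) (hG : G ≠ 0) :
    ‖c / F - c / G‖ = ‖c‖ * ‖G - F‖ / (‖F‖ * ‖G‖) := by
  rw [div_sub_div c c hF hG, mul_comm F c, ← mul_sub, norm_div, norm_mul, norm_mul]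

section ChargeCorrelation

variable (vs τ ω p₀ p₁ : ℝ)

/-- `(1 - τ s) (-i p₀ + ω v p₁)` with `v = v_s (1 + τ s) / (1 - τ s)`, the division cleared. -/
def chargeDenom (s : ℝ) : ℂ :=
  ((1 - τ * s : ℝ) : ℂ) * (-I * p₀) + ((ω * vs * (1 + τ * s) : ℝ) : ℂ) * p₁

/-- The correlation `N(p)` of the chiral Luttinger model at the coupling value `ŵ(p) = s`. -/
noncomputable def chargeCorrelation (K : ℂ) (s : ℝ) : ℂ :=
  -(K / (1 - (τ : ℂ) * (s : ℂ))) *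
    ((-I * p₀ - ω * vs * p₁) / (-I * p₀ + ω * ((vs * (1 + τ * s) / (1 - τ * s) : ℝ) : ℂ) * p₁))

variable {vs τ ω p₀ p₁}

lemma one_sub_mul_ne_zero_of_abs_le {s : ℝ} (hs : |τ * s| ≤ 3 / 4) : 1 - τ * s ≠ 0 := by
  linarith [le_abs_self (τ * s)]

lemma one_sub_mul_mul_eq_chargeDenom {s : ℝ} (h : 1 - τ * s ≠ 0) :
    (1 - (τ : ℂ) * s) * (-I * p₀ + ω * ((vs * (1 + τ * s) / (1 - τ * s) : ℝ) : ℂ) * p₁) =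
      chargeDenom vs τ ω p₀ p₁ s := by
  have h' : (1 - (τ : ℂ) * s) ≠ 0 := by exact_mod_cast h
  simp only [chargeDenom]
  push_cast
  field_simp

lemma chargeDenom_one_sub (s : ℝ) :
    chargeDenom vs τ ω p₀ p₁ 1 - chargeDenom vs τ ω p₀ p₁ s =
      τ * (s - 1) * (-I * p₀ - ω * vs * p₁) := by
  simp only [chargeDenom]
  push_cast
  ring

lemma norm_neg_I_mul_sub_le (hvs : 0 ≤ vs) (hω : |ω| = 1) :
    ‖-I * p₀ - ω * vs * p₁‖ ≤ max 1 vs * √(p₀ ^ 2 + p₁ ^ 2) := by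
  have : -I * p₀ - ω * vs * p₁ = ((1 : ℝ) : ℂ) * (-I * p₀) + ((-(ω * vs)) : ℝ) * p₁ := by
    push_cast; ring
  rw [this, norm_ofReal_mul_neg_I_mul_add]
  refine sqrt_mul_sq_add_mul_sq_le p₀ p₁ (by simp) ?_
  rw [abs_neg, abs_mul, hω, one_mul, abs_of_nonneg hvs]
  exact le_max_right 1 vs

lemma mul_sqrt_le_norm_chargeDenom (hvs : 0 < vs) (hω : |ω| = 1) {s : ℝ}
    (hs : |τ * s| ≤ 3 / 4) :
    min 1 vs / 4 * √(p₀ ^ 2 + p₁ ^ 2) ≤ ‖chargeDenom vs τ ω p₀ p₁ s‖ := by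
  obtain ⟨hl, hu⟩ := abs_le.mp hs
  rw [chargeDenom, norm_ofReal_mul_neg_I_mul_add]
  refine mul_sqrt_le_sqrt_mul_sq_add_mul_sq p₀ p₁ (by positivity) ?_ ?_
  · rw [abs_of_pos (by linarith)]
    linarith [min_le_left 1 vs]
  · rw [abs_mul, abs_mul, hω, one_mul, abs_of_pos hvs, abs_of_pos (by linarith)]
    nlinarith [min_le_right 1 vs]

lemma chargeDenom_ne_zero (hvs : 0 < vs) (hω : |ω| = 1) {s : ℝ} (hs : |τ * s| ≤ 3 / 4)
    (hp : 0 < √(p₀ ^ 2 + p₁ ^ 2)) : chargeDenom vs τ ω p₀ p₁ s ≠ 0 :=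
  norm_pos_iff.mp ((by positivity : 0 < min 1 vs / 4 * √(p₀ ^ 2 + p₁ ^ 2)).trans_le
    (mul_sqrt_le_norm_chargeDenom hvs hω hs))

lemma abs_mul_le_three_quarters {s : ℝ} (hτ : |τ| ≤ 1 / 2) (hs : |s - 1| ≤ 1 / 2) :
    |τ * s| ≤ 3 / 4 := by
  have : |s| ≤ 3 / 2 := by linarith [abs_sub_abs_le_abs_sub s 1, abs_one (α := ℝ)]
  rw [abs_mul]
  nlinarith [abs_nonneg τ, abs_nonneg s]

lemma velocityDenom_ne_zero (hvs : 0 < vs) (hω : |ω| = 1) {s : ℝ} (hs : |τ * s| ≤ 3 / 4)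
    (hp : 0 < √(p₀ ^ 2 + p₁ ^ 2)) :
    -I * p₀ + ω * ((vs * (1 + τ * s) / (1 - τ * s) : ℝ) : ℂ) * p₁ ≠ 0 :=
  right_ne_zero_of_mul <|
    (one_sub_mul_mul_eq_chargeDenom (one_sub_mul_ne_zero_of_abs_le hs)).trans_ne
      (chargeDenom_ne_zero hvs hω hs hp)

lemma chargeCorrelation_eq (K : ℂ) {s : ℝ} (h : 1 - τ * s ≠ 0) :
    chargeCorrelation vs τ ω p₀ p₁ K s =
      -(K * (-I * p₀ - ω * vs * p₁)) / chargeDenom vs τ ω p₀ p₁ s := by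
  rw [chargeCorrelation, ← one_sub_mul_mul_eq_chargeDenom h, neg_mul, div_mul_div_comm, neg_div]

theorem norm_chargeCorrelation_sub_le (hvs : 0 < vs) (hω : |ω| = 1) (hτ : |τ| ≤ 1 / 2)
    (K : ℂ) {s : ℝ} (hs : |s - 1| ≤ 1 / 2) (hp : 0 < √(p₀ ^ 2 + p₁ ^ 2)) :
    ‖chargeCorrelation vs τ ω p₀ p₁ K s - chargeCorrelation vs τ ω p₀ p₁ K 1‖ ≤
      8 * (max 1 vs / min 1 vs) ^ 2 * ‖K‖ * |s - 1| := by
  have hτs := abs_mul_le_three_quarters hτ hs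
  have hτ1 := abs_mul_le_three_quarters hτ (s := 1) (by norm_num)
  have hA := norm_neg_I_mul_sub_le (p₀ := p₀) (p₁ := p₁) hvs.le hω
  have hF := mul_sqrt_le_norm_chargeDenom (p₀ := p₀) (p₁ := p₁) hvs hω hτs
  have hG := mul_sqrt_le_norm_chargeDenom (p₀ := p₀) (p₁ := p₁) hvs hω hτ1
  have hF0 := chargeDenom_ne_zero hvs hω hτs hp
  have hG0 := chargeDenom_ne_zero hvs hω hτ1 hp
  rw [chargeCorrelation_eq K (one_sub_mul_ne_zero_of_abs_le hτs),
    chargeCorrelation_eq K (one_sub_mul_ne_zero_of_abs_le hτ1), norm_div_sub_div hF0 hG0,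
    chargeDenom_one_sub, norm_neg, norm_mul, norm_mul, norm_mul, norm_real,
    ← ofReal_one, ← ofReal_sub, norm_real, Real.norm_eq_abs, Real.norm_eq_abs,
    div_le_iff₀ (mul_pos (norm_pos_iff.mpr hF0) (norm_pos_iff.mpr hG0))]
  set n := √(p₀ ^ 2 + p₁ ^ 2)
  set a := ‖-I * p₀ - ω * vs * p₁‖
  calc ‖K‖ * a * (|τ| * |s - 1| * a) = ‖K‖ * |s - 1| * |τ| * a ^ 2 := by ring
    _ ≤ ‖K‖ * |s - 1| * (1 / 2) * (max 1 vs * n) ^ 2 := by gcongr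
    _ = 8 * (max 1 vs / min 1 vs) ^ 2 * ‖K‖ * |s - 1| *
          ((min 1 vs / 4 * n) * (min 1 vs / 4 * n)) := by field_simp; ring
    _ ≤ 8 * (max 1 vs / min 1 vs) ^ 2 * ‖K‖ * |s - 1| *
          (‖chargeDenom vs τ ω p₀ p₁ s‖ * ‖chargeDenom vs τ ω p₀ p₁ 1‖) := by gcongr

end ChargeCorrelation

/-- **Small-momentum expansion of the charge density–density correlation.** For the spin
velocity `v_s > 0` and anomaly `τ` with `|τ| ≤ 1/2`, there exist `ε, C₁ > 0` (depending
only on `v_s, τ, C₀`) such that, for any chirality `ω = ±1`, amplitude `K`, and interaction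
`ŵ` with `ŵ(0) = 1` and `|ŵ(p) − 1| ≤ C₀‖p‖`, the correlation `N(p)` built from the
momentum-dependent velocity `v(p) = v_s(1+τŵ(p))/(1−τŵ(p))` differs from its value with
`v(p)` replaced by the charge velocity `v_c = v_s(1+τ)/(1−τ)` by at most `C₁|K|‖p‖`, all
denominators being nonzero, for `0 < ‖p‖ ≤ ε`. -/
theorem density_correlation_small_momentum
    (vs τ C₀ : ℝ) (hvs : 0 < vs) (hτ : |τ| ≤ 1 / 2) (hC₀ : 0 < C₀) :
    ∃ ε : ℝ, 0 < ε ∧ ∃ C₁ : ℝ, 0 < C₁ ∧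
      ∀ (ω : ℝ), (ω = 1 ∨ ω = -1) →
      ∀ (K : ℂ) (w : ℝ → ℝ → ℝ),
        w 0 0 = 1 →
        (∀ p₀ p₁ : ℝ, Real.sqrt (p₀ ^ 2 + p₁ ^ 2) ≤ 1 →
          |w p₀ p₁ - 1| ≤ C₀ * Real.sqrt (p₀ ^ 2 + p₁ ^ 2)) →
        ∀ p₀ p₁ : ℝ, 0 < Real.sqrt (p₀ ^ 2 + p₁ ^ 2) → Real.sqrt (p₀ ^ 2 + p₁ ^ 2) ≤ ε →
          (1 - τ * w p₀ p₁ ≠ 0) ∧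
          (1 - τ ≠ 0) ∧
          (-Complex.I * (p₀ : ℂ) +
              (ω : ℂ) * ((vs * (1 + τ * w p₀ p₁) / (1 - τ * w p₀ p₁) : ℝ) : ℂ) * (p₁ : ℂ)
            ≠ 0) ∧
          (-Complex.I * (p₀ : ℂ) +
              (ω : ℂ) * ((vs * (1 + τ) / (1 - τ) : ℝ) : ℂ) * (p₁ : ℂ) ≠ 0) ∧
          ‖((-(K / (1 - (τ : ℂ) * ((w p₀ p₁ : ℝ) : ℂ))) *
                ((-Complex.I * (p₀ : ℂ) - (ω : ℂ) * (vs : ℂ) * (p₁ : ℂ)) /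
                  (-Complex.I * (p₀ : ℂ) +
                    (ω : ℂ) * ((vs * (1 + τ * w p₀ p₁) / (1 - τ * w p₀ p₁) : ℝ) : ℂ) *
                      (p₁ : ℂ))))
              - (-(K / (1 - (τ : ℂ))) *
                  ((-Complex.I * (p₀ : ℂ) - (ω : ℂ) * (vs : ℂ) * (p₁ : ℂ)) /
                    (-Complex.I * (p₀ : ℂ) +
                      (ω : ℂ) * ((vs * (1 + τ) / (1 - τ) : ℝ) : ℂ) * (p₁ : ℂ)))))‖
            ≤ C₁ * ‖K‖ * Real.sqrt (p₀ ^ 2 + p₁ ^ 2) := by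
  refine ⟨min 1 (1 / (2 * C₀)), by positivity, 8 * (max 1 vs / min 1 vs) ^ 2 * C₀,
    by positivity, ?_⟩
  intro ω hω K w _ hw p₀ p₁ hp hpε
  have hω' : |ω| = 1 := by rcases hω with rfl | rfl <;> simp
  have hr : |w p₀ p₁ - 1| ≤ C₀ * √(p₀ ^ 2 + p₁ ^ 2) := hw p₀ p₁ (hpε.trans (min_le_left _ _))
  have hr' : |w p₀ p₁ - 1| ≤ 1 / 2 :=
    calc |w p₀ p₁ - 1| ≤ C₀ * (1 / (2 * C₀)) :=
          hr.trans (by gcongr; exact hpε.trans (min_le_right _ _))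
      _ = 1 / 2 := by field_simp
  have hτr := abs_mul_le_three_quarters hτ hr'
  have hτ1 := abs_mul_le_three_quarters hτ (s := 1) (by norm_num)
  have hN := norm_chargeCorrelation_sub_le hvs hω' hτ K hr' hp
  simp only [chargeCorrelation, ofReal_one, mul_one] at hN
  refine ⟨one_sub_mul_ne_zero_of_abs_le hτr, ?_, velocityDenom_ne_zero hvs hω' hτr hp, ?_, ?_⟩
  · simpa using one_sub_mul_ne_zero_of_abs_le hτ1
  · simpa using velocityDenom_ne_zero hvs hω' hτ1 hp
  calc _ ≤ 8 * (max 1 vs / min 1 vs) ^ 2 * ‖K‖ * |w p₀ p₁ - 1| := hN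
    _ ≤ 8 * (max 1 vs / min 1 vs) ^ 2 * ‖K‖ * (C₀ * √(p₀ ^ 2 + p₁ ^ 2)) := by gcongr
    _ = _ := by ring
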